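/- arXiv:2506.07089 — 2 statements merged into one kernel-verified Lean document; each statement's English description precedes it below -/
import Mathlib

section
/- For every ε > 0 there exists a constant K_ε such that for all real X ≥ 2, the number of pairs (A,B) ∈ ℤ^2 with |A| ≤ X, |B| ≤ X, satisfying the minimality condition that for every prime p, if p^6 divides B then p^4 does not divide A, and such that the polynomial x^3 + Ax + B is reducible over ℚ, is at most K_ε · X^{1+ε}. -/
/-!
By Gauss's lemma a reducible monic integer cubic `x³ + Ax + B` has an integer root `z`, and then
`B = z k` and `A = -z² - k` for the integer `k = -(z² + A)`. So, apart from the `O(X)` pairs with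
`B = 0`, the pair `(A, B)` is determined by a lattice point `(z, k)` under the hyperbola
`|z k| ≤ X`, of which there are `O(X log X)` by the harmonic sum, and `X log X ≤ X^{1+ε}/ε`.
-/

open Polynomial

theorem Polynomial.Monic.exists_isRoot_of_not_irreducible_map {A K : Type*} [CommRing A]
    [IsDomain A] [UniqueFactorizationMonoid A] [Field K] [Algebra A K] [IsFractionRing A K]
    {p : A[X]} (hp : p.Monic) (hp2 : 2 ≤ p.natDegree) (hp3 : p.natDegree ≤ 3)
    (h : ¬Irreducible (p.map (algebraMap A K))) : ∃ z : A, p.IsRoot z := by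
  have hdeg : (p.map (algebraMap A K)).natDegree = p.natDegree := hp.natDegree_map _
  obtain ⟨r, hr⟩ := Multiset.exists_mem_of_ne_zero fun h0 => h <|
    ((hp.map _).irreducible_iff_roots_eq_zero_of_degree_le_three (hdeg ▸ hp2) (hdeg ▸ hp3)).mpr h0
  have hr : aeval r p = 0 := by
    rw [← eval_map_algebraMap]
    exact (mem_roots (hp.map _).ne_zero).mp hr
  obtain ⟨z, rfl, -⟩ := exists_integer_of_is_root_of_monic hp hr
  refine ⟨z, IsFractionRing.injective A K ?_⟩
  rw [← aeval_algebraMap_apply_eq_algebraMap_eval, hr, map_zero]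

theorem exists_int_root_of_not_irreducible_cubic (a b : ℤ)
    (h : ¬Irreducible (X ^ 3 + C (a : ℚ) * X + C (b : ℚ))) : ∃ z : ℤ, z ^ 3 + a * z + b = 0 := by
  have hmap : (X ^ 3 + C a * X + C b : ℤ[X]).map (algebraMap ℤ ℚ) =
      X ^ 3 + C (a : ℚ) * X + C (b : ℚ) := by simp
  have hdeg : (X ^ 3 + C a * X + C b : ℤ[X]).natDegree = 3 := by compute_degree!
  obtain ⟨z, hz⟩ := Monic.exists_isRoot_of_not_irreducible_map (by monicity!) (by omega) hdeg.le
    (hmap ▸ h)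
  exact ⟨z, by simpa using hz⟩

open Finset

noncomputable def hyperbolaLatticePoints (n : ℕ) : Finset (ℤ × ℤ) :=
  (Icc 1 n).biUnion fun r => {(r : ℤ), -(r : ℤ)} ×ˢ Icc (-((n / r : ℕ) : ℤ)) (n / r : ℕ)

theorem mem_hyperbolaLatticePoints {n : ℕ} {z k : ℤ} (h0 : z * k ≠ 0) (h : |z * k| ≤ n) :
    (z, k) ∈ hyperbolaLatticePoints n := by
  obtain ⟨hz, hk0⟩ := mul_ne_zero_iff.mp h0
  have hzk : z.natAbs * k.natAbs ≤ n := by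
    rw [Int.abs_eq_natAbs, Int.natAbs_mul] at h; exact_mod_cast h
  have hz1 : 1 ≤ z.natAbs := Int.natAbs_pos.mpr hz
  have hk : k.natAbs ≤ n / z.natAbs := (Nat.le_div_iff_mul_le hz1).mpr (by linarith)
  have hzn : z.natAbs ≤ n := le_trans (Nat.le_mul_of_pos_right _ (Int.natAbs_pos.mpr hk0)) hzk
  simp only [hyperbolaLatticePoints, mem_biUnion, mem_Icc, mem_product, mem_insert,
    mem_singleton]
  refine ⟨z.natAbs, ⟨hz1, hzn⟩, ?_, ?_⟩ <;> omega

theorem card_hyperbolaLatticePoints_le (n : ℕ) :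
    ((hyperbolaLatticePoints n).card : ℝ) ≤ 4 * n * (1 + Real.log n) + 2 * n := by
  have hcard : (hyperbolaLatticePoints n).card ≤ ∑ r ∈ Icc 1 n, (4 * (n / r) + 2) := by
    refine card_biUnion_le.trans (sum_le_sum fun r _ => ?_)
    rw [card_product, Int.card_Icc]
    have h2 : ({(r : ℤ), -(r : ℤ)} : Finset ℤ).card ≤ 2 := card_le_two
    have : (((n / r : ℕ) : ℤ) + 1 - -((n / r : ℕ) : ℤ)).toNat = 2 * (n / r) + 1 := by omega
    rw [this]; nlinarith
  have hharmonic : ∑ r ∈ Icc 1 n, ((r : ℝ))⁻¹ ≤ 1 + Real.log n := by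
    simpa [harmonic_eq_sum_Icc] using harmonic_le_one_add_log n
  calc ((hyperbolaLatticePoints n).card : ℝ)
      ≤ ∑ r ∈ Icc 1 n, (4 * ((n : ℝ) / r) + 2) := by
        refine (Nat.cast_le.mpr hcard).trans ?_
        push_cast
        exact sum_le_sum fun r _ => by gcongr; exact Nat.cast_div_le
    _ = 4 * n * ∑ r ∈ Icc 1 n, ((r : ℝ))⁻¹ + 2 * n := by
        simp [sum_add_distrib, mul_sum, div_eq_mul_inv, mul_assoc]; ring
    _ ≤ 4 * n * (1 + Real.log n) + 2 * n := by gcongr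

theorem Real.mul_log_le_rpow_div {x ε : ℝ} (hx : 0 ≤ x) (hε : 0 < ε) :
    x * Real.log x ≤ x ^ (1 + ε) / ε := by
  rw [Real.rpow_add' hx (by linarith), Real.rpow_one, mul_div_assoc]
  exact mul_le_mul_of_nonneg_left (Real.log_le_rpow_div hx hε) hx

/-- `x³ + (-z² - k) x + z k = (x - z) (x² + z x - k)`. -/
def cubicCoeffsOfRoot (q : ℤ × ℤ) : ℤ × ℤ := (-q.1 ^ 2 - q.2, q.1 * q.2)

noncomputable def cubicsWithIntRootCover (n : ℕ) : Finset (ℤ × ℤ) :=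
  (Icc (-(n : ℤ)) n ×ˢ {0}) ∪ (hyperbolaLatticePoints n).image cubicCoeffsOfRoot

theorem mem_cubicsWithIntRootCover {n : ℕ} {a b z : ℤ} (ha : |a| ≤ n) (hb : |b| ≤ n)
    (hz : z ^ 3 + a * z + b = 0) : (a, b) ∈ cubicsWithIntRootCover n := by
  rcases eq_or_ne b 0 with rfl | hb0
  · exact mem_union_left _ (by simpa [abs_le] using ha)
  · have hzb : z * -(z ^ 2 + a) = b := by linear_combination -hz
    refine mem_union_right _ (mem_image.mpr ⟨(z, -(z ^ 2 + a)), ?_, ?_⟩)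
    · exact mem_hyperbolaLatticePoints (hzb ▸ hb0) (hzb ▸ hb)
    · simp only [cubicCoeffsOfRoot, hzb, Prod.mk.injEq, and_true]
      ring

theorem card_cubicsWithIntRootCover_le (n : ℕ) :
    ((cubicsWithIntRootCover n).card : ℝ) ≤ 8 * n + 1 + 4 * (n * Real.log n) := by
  have hzero : (Icc (-(n : ℤ)) n ×ˢ ({0} : Finset ℤ)).card = 2 * n + 1 := by
    rw [card_product, Int.card_Icc, card_singleton]; omega
  have hcard : (cubicsWithIntRootCover n).card ≤ 2 * n + 1 + (hyperbolaLatticePoints n).card := by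
    rw [← hzero]
    exact (card_union_le _ _).trans (Nat.add_le_add_left card_image_le _)
  have hcard' : ((cubicsWithIntRootCover n).card : ℝ) ≤
      2 * n + 1 + (hyperbolaLatticePoints n).card := by exact_mod_cast hcard
  linarith [card_hyperbolaLatticePoints_le n]

/-- The number of monic cubics `x³ + Ax + B` with integer coefficients `|A| ≤ X`,
`|B| ≤ X`, satisfying the minimality condition (`p⁶ ∣ B → p⁴ ∤ A` for all primes `p`),
that are reducible over `ℚ`, is at most `K_ε · X^{1+ε}`. -/
theorem reducible_minimal_cubics_bound (ε : ℝ) (hε : 0 < ε) :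
    ∃ K : ℝ, ∀ X : ℝ, 2 ≤ X →
      ({p : ℤ × ℤ | ((|p.1| : ℤ) : ℝ) ≤ X ∧ ((|p.2| : ℤ) : ℝ) ≤ X ∧
          (∀ q : ℕ, q.Prime → (q : ℤ) ^ 6 ∣ p.2 → ¬((q : ℤ) ^ 4 ∣ p.1)) ∧
          ¬Irreducible ((Polynomial.X ^ 3 + Polynomial.C (p.1 : ℚ) * Polynomial.X +
            Polynomial.C (p.2 : ℚ) : Polynomial ℚ))}.ncard : ℝ) ≤
        K * X ^ (1 + ε) := by
  refine ⟨9 + 4 / ε, fun X hX => ?_⟩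
  set n := ⌊X⌋₊
  have hnX : (n : ℝ) ≤ X := Nat.floor_le (by linarith)
  have habs {z : ℤ} (hz : ((|z| : ℤ) : ℝ) ≤ X) : |z| ≤ n := by
    rw [Int.natCast_floor_eq_floor (by linarith)]
    exact Int.le_floor.mpr hz
  have hlog : Real.log n ≤ Real.log X := by
    rcases n.eq_zero_or_pos with hn | hn
    · rw [hn, Nat.cast_zero, Real.log_zero]; exact Real.log_nonneg (by linarith)
    · exact Real.log_le_log (by exact_mod_cast hn) hnX
  calc _ ≤ ((cubicsWithIntRootCover n).card : ℝ) := by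
        rw [← Set.ncard_coe_finset]
        refine Nat.cast_le.mpr (Set.ncard_le_ncard ?_ (finite_toSet _))
        rintro ⟨a, b⟩ ⟨ha, hb, -, hred⟩
        obtain ⟨z, hz⟩ := exists_int_root_of_not_irreducible_cubic a b hred
        exact mem_cubicsWithIntRootCover (habs ha) (habs hb) hz
    _ ≤ 8 * n + 1 + 4 * (n * Real.log n) := by
        exact card_cubicsWithIntRootCover_le n
    _ ≤ 9 * X + 4 * (X * Real.log X) := by
        gcongr ?_ + 4 * ?_
        · linarith
        · exact mul_le_mul hnX hlog (Real.log_natCast_nonneg n) (by linarith)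
    _ ≤ 9 * X ^ (1 + ε) + 4 * (X ^ (1 + ε) / ε) := by
        gcongr
        · exact Real.self_le_rpow_of_one_le (by linarith) (by linarith)
        · exact Real.mul_log_le_rpow_div (by linarith) hε
    _ = (9 + 4 / ε) * X ^ (1 + ε) := by ring
end

section
/- Let f = (a,b,c,d,e) be an integral binary quartic form with a ≠ 0, and set H = 8ac − 3b^2, R = b^3 + 8a^2 d − 4abc, J = J(f), and assume R ≠ 0. Suppose u' ∈ ℤ is such that (u' : 4a) is a root of f in P^1(ℚ) and every root of f in P^1(ℚ) equals (u' : 4a). Set u = −u' − b and v = (u^2 + H)/2 ∈ ℚ. Then (4a)^3 · J = 2H^3 − 9Hv^2 + 3(uH)^2 − 3(3R − uH)^2. -/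
/-! Among the quantities involved only `(4a)³ J` depends on `e`, with `e`-coefficient `(4a)³ · 9H`,
while `f(x, 4a)` has `e`-coefficient `(4a)⁴`. So `4a · (LHS - RHS) - 9H · f(x, 4a)` is free of `e`;
it vanishes whenever `f(x, 4a) = 0`, which can always be arranged by solving for `e`, hence it is
identically zero. -/

def evalQ (a b c d e : ℤ) (x y : ℚ) : ℚ :=
  (a : ℚ) * x ^ 4 + (b : ℚ) * x ^ 3 * y + (c : ℚ) * x ^ 2 * y ^ 2 +
    (d : ℚ) * x * y ^ 3 + (e : ℚ) * y ^ 4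

namespace BinaryQuartic

variable {A : Type*} [CommRing A]

def eval (a b c d e x y : A) : A :=
  a * x ^ 4 + b * x ^ 3 * y + c * x ^ 2 * y ^ 2 + d * x * y ^ 3 + e * y ^ 4

def H (a b c : A) : A := 8 * a * c - 3 * b ^ 2

def R (a b c d : A) : A := b ^ 3 + 8 * a ^ 2 * d - 4 * a * b * c

def J (a b c d e : A) : A :=
  72 * a * c * e + 9 * b * c * d - 27 * a * d ^ 2 - 27 * e * b ^ 2 - 2 * c ^ 3

theorem mul_J_sub_eq_mul_eval (a b c d e x u v : A) (hu : u = -x - b)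
    (hv : 2 * v = u ^ 2 + H a b c) :
    16 * a * ((4 * a) ^ 3 * J a b c d e -
        (2 * H a b c ^ 3 - 9 * H a b c * v ^ 2 + 3 * (u * H a b c) ^ 2 -
          3 * (3 * R a b c d - u * H a b c) ^ 2)) =
      36 * H a b c * eval a b c d e x (4 * a) := by
  subst hu
  linear_combination (norm := (simp only [H, R, J, eval]; ring))
    (36 * a * H a b c * (2 * v + (-x - b) ^ 2 + H a b c)) * hv

theorem J_eq_of_eval_eq_zero {K : Type*} [Field K] [NeZero (2 : K)] {a b c d e x u v : K}
    (ha : a ≠ 0) (hroot : eval a b c d e x (4 * a) = 0) (hu : u = -x - b)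
    (hv : 2 * v = u ^ 2 + H a b c) :
    (4 * a) ^ 3 * J a b c d e =
      2 * H a b c ^ 3 - 9 * H a b c * v ^ 2 + 3 * (u * H a b c) ^ 2 -
        3 * (3 * R a b c d - u * H a b c) ^ 2 := by
  have h16 : (16 : K) * a ≠ 0 := by
    refine mul_ne_zero ?_ ha
    rw [show (16 : K) = 2 ^ 4 by norm_num]
    exact pow_ne_zero 4 two_ne_zero
  have key := mul_J_sub_eq_mul_eval a b c d e x u v hu hv
  rw [hroot, mul_zero] at key
  exact sub_eq_zero.mp ((mul_eq_zero.mp key).resolve_left h16)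

end BinaryQuartic

theorem J_of_unique_root_general (a b c d e u' H R J u : ℤ) (v : ℚ) (ha : a ≠ 0)
    (hH : H = 8 * a * c - 3 * b ^ 2)
    (hRdef : R = b ^ 3 + 8 * a ^ 2 * d - 4 * a * b * c)
    (hJ : J = 72 * a * c * e + 9 * b * c * d - 27 * a * d ^ 2 - 27 * e * b ^ 2 - 2 * c ^ 3)
    (hu : u = -u' - b) (hv : v = ((u : ℚ) ^ 2 + (H : ℚ)) / 2)
    (hroot : evalQ a b c d e (u' : ℚ) ((4 * a : ℤ) : ℚ) = 0) :
    ((4 * a : ℤ) : ℚ) ^ 3 * (J : ℚ) =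
      2 * (H : ℚ) ^ 3 - 9 * (H : ℚ) * v ^ 2 + 3 * ((u : ℚ) * (H : ℚ)) ^ 2 -
        3 * (3 * (R : ℚ) - (u : ℚ) * (H : ℚ)) ^ 2 := by
  have hH' : (H : ℚ) = BinaryQuartic.H (a : ℚ) b c := by simp [hH, BinaryQuartic.H]
  have hR' : (R : ℚ) = BinaryQuartic.R (a : ℚ) b c d := by simp [hRdef, BinaryQuartic.R]
  have hJ' : (J : ℚ) = BinaryQuartic.J (a : ℚ) b c d e := by simp [hJ, BinaryQuartic.J]
  rw [hH', hR', hJ', Int.cast_mul, Int.cast_ofNat]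
  refine BinaryQuartic.J_eq_of_eval_eq_zero (x := (u' : ℚ)) (Int.cast_ne_zero.mpr ha) ?_
    (by exact_mod_cast hu) ?_
  · simpa [evalQ, BinaryQuartic.eval] using hroot
  · rw [hv, ← hH']
    ring

/-- Relation between the `J`-invariant of a binary quartic form with a unique root
`(u' : 4a)` in `ℙ¹(ℚ)` and its semi-invariants: with `H = 8ac - 3b²`,
`R = b³ + 8a²d - 4abc ≠ 0`, `u = -u' - b` and `v = (u² + H)/2`, one has
`(4a)³ J = 2H³ - 9Hv² + 3(uH)² - 3(3R - uH)²`. -/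
theorem J_of_unique_root (a b c d e u' H R J u : ℤ) (v : ℚ) (ha : a ≠ 0)
    (hH : H = 8 * a * c - 3 * b ^ 2)
    (hRdef : R = b ^ 3 + 8 * a ^ 2 * d - 4 * a * b * c) (hR : R ≠ 0)
    (hJ : J = 72 * a * c * e + 9 * b * c * d - 27 * a * d ^ 2 - 27 * e * b ^ 2 - 2 * c ^ 3)
    (hu : u = -u' - b) (hv : v = ((u : ℚ) ^ 2 + (H : ℚ)) / 2)
    (hroot : evalQ a b c d e (u' : ℚ) ((4 * a : ℤ) : ℚ) = 0)
    (huniq : ∀ x y : ℚ, ¬(x = 0 ∧ y = 0) → evalQ a b c d e x y = 0 →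
      ∃ t : ℚ, x = t * (u' : ℚ) ∧ y = t * ((4 * a : ℤ) : ℚ)) :
    ((4 * a : ℤ) : ℚ) ^ 3 * (J : ℚ) =
      2 * (H : ℚ) ^ 3 - 9 * (H : ℚ) * v ^ 2 + 3 * ((u : ℚ) * (H : ℚ)) ^ 2 -
        3 * (3 * (R : ℚ) - (u : ℚ) * (H : ℚ)) ^ 2 :=
  J_of_unique_root_general a b c d e u' H R J u v ha hH hRdef hJ hu hv hroot
end
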